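/- There exists a constant C > 0, depending only on q, such that for all n ∈ ½ℤ₊ with n ≥ 1/2, all half-integers i ∈ {−n, …, n} and j ∈ {−n+1/2, …, n−1/2}, every entry of the 2×2 matrix a⁻_{nij} − q^{2n+i+j+1/2}(1−q^{2n−2i})^{1/2} · diag(q(1−q^{2n−2j+1})^{1/2}, (1−q^{2n−2j−1})^{1/2}) has absolute value at most C·q^{2n}. -/
import Mathlib


noncomputable section

open Real

/-- The q-number `[m] = (q^m - q^(-m))/(q - q⁻¹)`. -/
def qnum (q m : ℝ) : ℝ := (q ^ m - q ^ (-m)) / (q - q⁻¹)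

/-- The 2×2 matrix `a⁺_{nij}`. -/
def aP (q n i j : ℝ) : Matrix (Fin 2) (Fin 2) ℝ :=
  (q ^ ((i + j - 1/2) / 2) * Real.sqrt (qnum q (n + i + 1))) •
    !![q ^ (-n - 1/2) * Real.sqrt (qnum q (n + j + 3/2)) / qnum q (2*n + 2), 0;
       q ^ ((1:ℝ)/2) * Real.sqrt (qnum q (n - j + 1/2)) / (qnum q (2*n + 1) * qnum q (2*n + 2)),
       q ^ (-n) * Real.sqrt (qnum q (n + j + 1/2)) / qnum q (2*n + 1)]

/-- The 2×2 matrix `a⁻_{nij}`. -/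
def aM (q n i j : ℝ) : Matrix (Fin 2) (Fin 2) ℝ :=
  (q ^ ((i + j - 1/2) / 2) * Real.sqrt (qnum q (n - i))) •
    !![q ^ (n + 1) * Real.sqrt (qnum q (n - j + 1/2)) / qnum q (2*n + 1),
       -(q ^ ((1:ℝ)/2) * Real.sqrt (qnum q (n + j + 1/2)) / (qnum q (2*n) * qnum q (2*n + 1)));
       0, q ^ (n + 1/2) * Real.sqrt (qnum q (n - j - 1/2)) / qnum q (2*n)]

/-- The 2×2 matrix `b⁺_{nij}`. -/
def bP (q n i j : ℝ) : Matrix (Fin 2) (Fin 2) ℝ :=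
  (q ^ ((i + j - 1/2) / 2) * Real.sqrt (qnum q (n + i + 1))) •
    !![Real.sqrt (qnum q (n - j + 3/2)) / qnum q (2*n + 2), 0;
       -(q ^ (-n - 1) * Real.sqrt (qnum q (n + j + 1/2)) / (qnum q (2*n + 1) * qnum q (2*n + 2))),
       q ^ (-(1:ℝ)/2) * Real.sqrt (qnum q (n - j + 1/2)) / qnum q (2*n + 1)]

/-- The 2×2 matrix `b⁻_{nij}`. -/
def bM (q n i j : ℝ) : Matrix (Fin 2) (Fin 2) ℝ :=
  (q ^ ((i + j - 1/2) / 2) * Real.sqrt (qnum q (n - i))) •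
    !![-(q ^ (-(1:ℝ)/2) * Real.sqrt (qnum q (n + j + 1/2)) / qnum q (2*n + 1)),
       -(q ^ n * Real.sqrt (qnum q (n - j + 1/2)) / (qnum q (2*n) * qnum q (2*n + 1)));
       0, -(Real.sqrt (qnum q (n + j - 1/2)) / qnum q (2*n))]

/-- `n` is a nonnegative half-integer: `n ∈ ½ℤ₊ = {0, 1/2, 1, 3/2, …}`. -/
def HalfNat (n : ℝ) : Prop := ∃ N : ℕ, (N : ℝ) = 2 * n

/-- `i ∈ {-n, -n+1, …, n}`. -/
def IdxRange (n i : ℝ) : Prop := (∃ k : ℕ, (k : ℝ) = i + n) ∧ i ≤ n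

/-- `j ∈ {-n+1/2, -n+3/2, …, n-1/2}`. -/
def JRangeIn (n j : ℝ) : Prop := (∃ k : ℕ, (k : ℝ) = j + n - 1/2) ∧ j ≤ n - 1/2

/-- `j ∈ {-n-1/2, -n+1/2, …, n+1/2}`. -/
def JRangeOut (n j : ℝ) : Prop := (∃ k : ℕ, (k : ℝ) = j + n + 1/2) ∧ j ≤ n + 1/2

lemma qnumEq {q : ℝ} (hq0 : 0 < q) (m : ℝ) :
    qnum q m = q ^ (-m) * (1 - q ^ (2*m)) / (q⁻¹ - q) := by
  have h : q ^ m = q ^ (-m) * q ^ (2*m) := by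
    rw [← Real.rpow_add hq0]; ring_nf
  have h2 : q ^ m - q ^ (-m) = -(q ^ (-m) * (1 - q ^ (2*m))) := by rw [h]; ring
  rw [qnum, h2, show q - q⁻¹ = -(q⁻¹ - q) by ring, neg_div_neg_eq]

lemma sqrtQnum {q : ℝ} (hq0 : 0 < q) (hq1 : q < 1) {m : ℝ} (hm : 0 ≤ m) :
    Real.sqrt (qnum q m) = q ^ (-(m/2)) * Real.sqrt (1 - q ^ (2*m)) / Real.sqrt (q⁻¹ - q) := by
  have hE : 0 ≤ 1 - q ^ (2*m) := by
    have := Real.rpow_le_one hq0.le hq1.le (by linarith : 0 ≤ 2*m)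
    linarith
  have hsq : q ^ (-m) = (q ^ (-(m/2)))^2 := by
    rw [← Real.rpow_natCast (q ^ (-(m/2))) 2, ← Real.rpow_mul hq0.le]
    norm_num
  rw [qnumEq hq0, Real.sqrt_div (by positivity), Real.sqrt_mul (by positivity), hsq,
    Real.sqrt_sq (by positivity)]

lemma key1 {q sc c E3 : ℝ} (A B : ℝ) (hq0 : 0 < q) (hsc : sc * sc = c) (hsc0 : sc ≠ 0)
    (hE3 : E3 ≠ 0) (a1 a2 a3 a4 a5 : ℝ) :
    q ^ a1 * (q ^ a2 * A / sc) * (q ^ a3 * (q ^ a4 * B / sc) / (q ^ a5 * E3 / c)) =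
      q ^ (a1 + a2 + a3 + a4 - a5) * A * B / E3 := by
  subst hsc
  have h5 : q ^ a5 ≠ 0 := (Real.rpow_pos_of_pos hq0 _).ne'
  field_simp
  rw [Real.rpow_sub hq0]
  simp only [Real.rpow_add hq0]
  field_simp

lemma key2 {q sc c E1 E2 : ℝ} (A B : ℝ) (hq0 : 0 < q) (hsc : sc * sc = c) (hsc0 : sc ≠ 0)
    (hE1 : E1 ≠ 0) (hE2 : E2 ≠ 0) (a1 a2 a3 a4 a5 a6 : ℝ) :
    q ^ a1 * (q ^ a2 * A / sc) *
      (q ^ a3 * (q ^ a4 * B / sc) / ((q ^ a5 * E1 / c) * (q ^ a6 * E2 / c))) =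
      q ^ (a1 + a2 + a3 + a4 - a5 - a6) * A * B * c / (E1 * E2) := by
  subst hsc
  have h5 : q ^ a5 ≠ 0 := (Real.rpow_pos_of_pos hq0 _).ne'
  have h6 : q ^ a6 ≠ 0 := (Real.rpow_pos_of_pos hq0 _).ne'
  field_simp
  simp only [Real.rpow_sub hq0]
  simp only [Real.rpow_add hq0]
  field_simp

lemma sqrtLeOne {x : ℝ} (h : x ≤ 1) : Real.sqrt x ≤ 1 := by
  have := Real.sqrt_le_sqrt h
  simpa using this


lemma entry00 {q : ℝ} (hq0 : 0 < q) (hq1 : q < 1) {n i j : ℝ} (hn : 1/2 ≤ n)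
    (hile : i ≤ n) (hjle : j ≤ n - 1/2) :
    (aM q n i j) 0 0 = q ^ (2*n + i + j + 3/2) * Real.sqrt (1 - q ^ (2*n - 2*i)) *
      Real.sqrt (1 - q ^ (2*n - 2*j + 1)) / (1 - q ^ (4*n + 2)) := by
  have hc : 0 < q⁻¹ - q := by
    have hiq : 1 < q⁻¹ := by rw [← one_div, lt_div_iff₀ hq0]; linarith
    linarith
  have hsc0 : Real.sqrt (q⁻¹ - q) ≠ 0 := (Real.sqrt_pos.2 hc).ne'
  have hsc : Real.sqrt (q⁻¹ - q) * Real.sqrt (q⁻¹ - q) = q⁻¹ - q := Real.mul_self_sqrt hc.le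
  have hE3 : (1 : ℝ) - q ^ (2*(2*n+1)) ≠ 0 := by
    have := Real.rpow_lt_one hq0.le hq1 (by linarith : (0:ℝ) < 2*(2*n+1))
    linarith
  have h00 : (aM q n i j) 0 0 = (q ^ ((i + j - 1/2) / 2) * Real.sqrt (qnum q (n - i))) *
      (q ^ (n + 1) * Real.sqrt (qnum q (n - j + 1/2)) / qnum q (2*n + 1)) := by
    simp [aM]
  rw [h00, sqrtQnum hq0 hq1 (by linarith : (0:ℝ) ≤ n - i),
      sqrtQnum hq0 hq1 (by linarith : (0:ℝ) ≤ n - j + 1/2),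
      qnumEq hq0 (2*n+1),
      key1 _ _ hq0 hsc hsc0 hE3,
      show (i + j - 1/2) / 2 + -((n - i)/2) + (n + 1) + -((n - j + 1/2)/2) - -(2*n+1)
        = 2*n + i + j + 3/2 from by ring,
      show 2*(n - i) = 2*n - 2*i from by ring,
      show 2*(n - j + 1/2) = 2*n - 2*j + 1 from by ring,
      show 2*(2*n + 1) = 4*n + 2 from by ring]

lemma entry11 {q : ℝ} (hq0 : 0 < q) (hq1 : q < 1) {n i j : ℝ} (hn : 1/2 ≤ n)
    (hile : i ≤ n) (hjle : j ≤ n - 1/2) :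
    (aM q n i j) 1 1 = q ^ (2*n + i + j + 1/2) * Real.sqrt (1 - q ^ (2*n - 2*i)) *
      Real.sqrt (1 - q ^ (2*n - 2*j - 1)) / (1 - q ^ (4*n)) := by
  have hc : 0 < q⁻¹ - q := by
    have hiq : 1 < q⁻¹ := by rw [← one_div, lt_div_iff₀ hq0]; linarith
    linarith
  have hsc0 : Real.sqrt (q⁻¹ - q) ≠ 0 := (Real.sqrt_pos.2 hc).ne'
  have hsc : Real.sqrt (q⁻¹ - q) * Real.sqrt (q⁻¹ - q) = q⁻¹ - q := Real.mul_self_sqrt hc.le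
  have hE4 : (1 : ℝ) - q ^ (2*(2*n)) ≠ 0 := by
    have := Real.rpow_lt_one hq0.le hq1 (by linarith : (0:ℝ) < 2*(2*n))
    linarith
  have h11 : (aM q n i j) 1 1 = (q ^ ((i + j - 1/2) / 2) * Real.sqrt (qnum q (n - i))) *
      (q ^ (n + 1/2) * Real.sqrt (qnum q (n - j - 1/2)) / qnum q (2*n)) := by
    simp [aM]
  rw [h11, sqrtQnum hq0 hq1 (by linarith : (0:ℝ) ≤ n - i),
      sqrtQnum hq0 hq1 (by linarith : (0:ℝ) ≤ n - j - 1/2),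
      qnumEq hq0 (2*n),
      key1 _ _ hq0 hsc hsc0 hE4,
      show (i + j - 1/2) / 2 + -((n - i)/2) + (n + 1/2) + -((n - j - 1/2)/2) - -(2*n)
        = 2*n + i + j + 1/2 from by ring,
      show 2*(n - i) = 2*n - 2*i from by ring,
      show 2*(n - j - 1/2) = 2*n - 2*j - 1 from by ring,
      show 2*(2*n) = 4*n from by ring]

lemma entry01 {q : ℝ} (hq0 : 0 < q) (hq1 : q < 1) {n i j : ℝ} (hn : 1/2 ≤ n)
    (hile : i ≤ n) (hjge : 1/2 - n ≤ j) :
    (aM q n i j) 0 1 = -(q ^ (3*n + i + 1) * Real.sqrt (1 - q ^ (2*n - 2*i)) *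
      Real.sqrt (1 - q ^ (2*n + 2*j + 1)) * (q⁻¹ - q) /
        ((1 - q ^ (4*n)) * (1 - q ^ (4*n + 2)))) := by
  have hc : 0 < q⁻¹ - q := by
    have hiq : 1 < q⁻¹ := by rw [← one_div, lt_div_iff₀ hq0]; linarith
    linarith
  have hsc0 : Real.sqrt (q⁻¹ - q) ≠ 0 := (Real.sqrt_pos.2 hc).ne'
  have hsc : Real.sqrt (q⁻¹ - q) * Real.sqrt (q⁻¹ - q) = q⁻¹ - q := Real.mul_self_sqrt hc.le
  have hE3 : (1 : ℝ) - q ^ (2*(2*n+1)) ≠ 0 := by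
    have := Real.rpow_lt_one hq0.le hq1 (by linarith : (0:ℝ) < 2*(2*n+1))
    linarith
  have hE4 : (1 : ℝ) - q ^ (2*(2*n)) ≠ 0 := by
    have := Real.rpow_lt_one hq0.le hq1 (by linarith : (0:ℝ) < 2*(2*n))
    linarith
  have h01 : (aM q n i j) 0 1 = -((q ^ ((i + j - 1/2) / 2) * Real.sqrt (qnum q (n - i))) *
      (q ^ ((1:ℝ)/2) * Real.sqrt (qnum q (n + j + 1/2)) /
        (qnum q (2*n) * qnum q (2*n + 1)))) := by
    simp [aM]
  rw [h01, sqrtQnum hq0 hq1 (by linarith : (0:ℝ) ≤ n - i),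
      sqrtQnum hq0 hq1 (by linarith : (0:ℝ) ≤ n + j + 1/2),
      qnumEq hq0 (2*n), qnumEq hq0 (2*n+1),
      key2 _ _ hq0 hsc hsc0 hE4 hE3,
      show (i + j - 1/2) / 2 + -((n - i)/2) + (1:ℝ)/2 + -((n + j + 1/2)/2) - -(2*n) - -(2*n+1)
        = 3*n + i + 1 from by ring,
      show 2*(n - i) = 2*n - 2*i from by ring,
      show 2*(n + j + 1/2) = 2*n + 2*j + 1 from by ring,
      show 2*(2*n) = 4*n from by ring,
      show 2*(2*n + 1) = 4*n + 2 from by ring]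

lemma entry10 (q n i j : ℝ) : (aM q n i j) 1 0 = 0 := by simp [aM]

set_option maxHeartbeats 1600000 in
/-- There is `C > 0` depending only on `q` such that for all `n ∈ ½ℤ₊` with
`n ≥ 1/2`, `i ∈ {-n,…,n}`, `j ∈ {-n+1/2,…,n-1/2}`, every entry of
`a⁻_{nij} - q^(2n+i+j+1/2) (1-q^(2n-2i))^(1/2) diag(q(1-q^(2n-2j+1))^(1/2), (1-q^(2n-2j-1))^(1/2))`
has absolute value at most `C·q^(2n)`. -/
theorem aMinus_asymptotics (q : ℝ) (hq0 : 0 < q) (hq1 : q < 1) :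
    ∃ C : ℝ, 0 < C ∧ ∀ n i j : ℝ, HalfNat n → 1/2 ≤ n → IdxRange n i → JRangeIn n j →
      ∀ r s : Fin 2,
        |(aM q n i j - (q ^ (2*n + i + j + 1/2) * Real.sqrt (1 - q ^ (2*n - 2*i))) •
            !![q * Real.sqrt (1 - q ^ (2*n - 2*j + 1)), 0;
               0, Real.sqrt (1 - q ^ (2*n - 2*j - 1))]) r s|
          ≤ C * q ^ (2 * n) := by
  have hc : 0 < q⁻¹ - q := by
    have hiq : 1 < q⁻¹ := by rw [← one_div, lt_div_iff₀ hq0]; linarith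
    linarith
  have hq1' : 0 < 1 - q := by linarith
  refine ⟨(1 + (q⁻¹ - q)) / ((1-q)*(1-q)), by positivity, ?_⟩
  have hCge : 1/(1-q) ≤ (1 + (q⁻¹ - q)) / ((1-q)*(1-q)) := by
    rw [div_le_div_iff₀ hq1' (by positivity)]
    nlinarith
  intro n i j _hN hn hI hJ r s
  obtain ⟨⟨k1, hk1⟩, hile⟩ := hI
  have hige : -n ≤ i := by
    have h0 : (0:ℝ) ≤ k1 := Nat.cast_nonneg _
    rw [hk1] at h0; linarith
  obtain ⟨⟨k2, hk2⟩, hjle⟩ := hJ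
  have hjge : 1/2 - n ≤ j := by
    have h0 : (0:ℝ) ≤ k2 := Nat.cast_nonneg _
    rw [hk2] at h0; linarith
  set A := Real.sqrt (1 - q ^ (2*n - 2*i)) with hA
  set B := Real.sqrt (1 - q ^ (2*n - 2*j + 1)) with hB
  set B' := Real.sqrt (1 - q ^ (2*n - 2*j - 1)) with hB'
  set B'' := Real.sqrt (1 - q ^ (2*n + 2*j + 1)) with hB''
  have hA0 : 0 ≤ A := Real.sqrt_nonneg _
  have hB0 : 0 ≤ B := Real.sqrt_nonneg _
  have hB'0 : 0 ≤ B' := Real.sqrt_nonneg _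
  have hB''0 : 0 ≤ B'' := Real.sqrt_nonneg _
  have hA1 : A ≤ 1 := sqrtLeOne (by
    have := Real.rpow_nonneg hq0.le (2*n - 2*i); linarith)
  have hB1 : B ≤ 1 := sqrtLeOne (by
    have := Real.rpow_nonneg hq0.le (2*n - 2*j + 1); linarith)
  have hB'1 : B' ≤ 1 := sqrtLeOne (by
    have := Real.rpow_nonneg hq0.le (2*n - 2*j - 1); linarith)
  have hB''1 : B'' ≤ 1 := sqrtLeOne (by
    have := Real.rpow_nonneg hq0.le (2*n + 2*j + 1); linarith)
  have hE3ge : 1 - q ≤ 1 - q ^ (4*n + 2) := by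
    have h := Real.rpow_le_rpow_of_exponent_ge hq0 hq1.le (by linarith : (1:ℝ) ≤ 4*n + 2)
    rw [Real.rpow_one] at h
    linarith
  have hE4ge : 1 - q ≤ 1 - q ^ (4*n) := by
    have h := Real.rpow_le_rpow_of_exponent_ge hq0 hq1.le (by linarith : (1:ℝ) ≤ 4*n)
    rw [Real.rpow_one] at h
    linarith
  have hE3le1 : q ^ (4*n+2) ≤ 1 := Real.rpow_le_one hq0.le hq1.le (by linarith)
  have hE4le1 : q ^ (4*n) ≤ 1 := Real.rpow_le_one hq0.le hq1.le (by linarith)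
  have hpow42 : q ^ (4*n + 2) ≤ q ^ (2*n) :=
    Real.rpow_le_rpow_of_exponent_ge hq0 hq1.le (by linarith)
  have hpow4 : q ^ (4*n) ≤ q ^ (2*n) :=
    Real.rpow_le_rpow_of_exponent_ge hq0 hq1.le (by linarith)
  have hpow3 : q ^ (3*n + i + 1) ≤ q ^ (2*n) :=
    Real.rpow_le_rpow_of_exponent_ge hq0 hq1.le (by linarith)
  have diagBound : ∀ T E P : ℝ, 0 ≤ T → T ≤ 1 → 1 - q ≤ E → E = 1 - P → P ≤ q ^ (2*n) →
      0 ≤ P → |T/E - T| ≤ (1 + (q⁻¹ - q)) / ((1-q)*(1-q)) * q ^ (2*n) := by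
    intro T E P hT0 hT1 hEge hEP hPle hP0
    have hEpos : 0 < E := by linarith
    have h1 : T/E - T = T * ((1-E)/E) := by field_simp
    have h1E : 0 ≤ 1 - E := by rw [hEP]; linarith
    rw [h1, abs_of_nonneg (by positivity)]
    have h2 : (1-E)/E ≤ q ^ (2*n) / (1-q) :=
      div_le_div₀ (by positivity) (by rw [hEP]; linarith) hq1' hEge
    calc T * ((1-E)/E) ≤ 1 * (q ^ (2*n)/(1-q)) :=
          mul_le_mul hT1 h2 (by positivity) one_pos.le
      _ = (1/(1-q)) * q ^ (2*n) := by ring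
      _ ≤ (1 + (q⁻¹ - q)) / ((1-q)*(1-q)) * q ^ (2*n) :=
          mul_le_mul_of_nonneg_right hCge (by positivity)
  fin_cases r <;> fin_cases s
  · -- (0,0)
    simp only [Matrix.sub_apply, Matrix.smul_apply, smul_eq_mul, Matrix.of_apply, Fin.zero_eta,
      Matrix.cons_val', Matrix.cons_val_zero, Matrix.empty_val', Matrix.cons_val_fin_one,
      Matrix.head_cons, Matrix.head_fin_const]
    rw [entry00 hq0 hq1 hn hile hjle]
    have hq' : q ^ (2*n + i + j + 1/2) * q ^ (1:ℝ) = q ^ (2*n + i + j + 3/2) := by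
      rw [← Real.rpow_add hq0]; congr 1; ring
    have htar : q ^ (2*n + i + j + 1/2) * A * (q * B) = q ^ (2*n + i + j + 3/2) * A * B := by
      rw [← hq', Real.rpow_one]; ring
    rw [htar]
    have hT1 : q ^ (2*n + i + j + 3/2) * A * B ≤ 1 :=
      mul_le_one₀ (mul_le_one₀ (Real.rpow_le_one hq0.le hq1.le (by linarith)) hA0 hA1) hB0 hB1
    exact diagBound _ _ (q ^ (4*n+2)) (by positivity) hT1 hE3ge rfl hpow42 (by positivity)
  · -- (0,1)
    simp only [Matrix.sub_apply, Matrix.smul_apply, smul_eq_mul, Matrix.of_apply, Fin.zero_eta, Fin.mk_one,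
      Matrix.cons_val', Matrix.cons_val_zero, Matrix.cons_val_one, Matrix.empty_val',
      Matrix.cons_val_fin_one, Matrix.head_cons, Matrix.head_fin_const, mul_zero, sub_zero]
    rw [entry01 hq0 hq1 hn hile hjge, abs_neg]
    have hE4pos : 0 < 1 - q ^ (4*n) := by linarith
    have hE3pos : 0 < 1 - q ^ (4*n+2) := by linarith
    rw [abs_of_nonneg (div_nonneg (by positivity) (mul_pos hE4pos hE3pos).le)]
    calc q ^ (3*n + i + 1) * A * B'' * (q⁻¹ - q) / ((1 - q ^ (4*n)) * (1 - q ^ (4*n + 2)))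
        ≤ q ^ (2*n) * 1 * 1 * (q⁻¹ - q) / ((1-q)*(1-q)) := by
          apply div_le_div₀ (by positivity) ?_ (by positivity)
            (mul_le_mul hE4ge hE3ge hq1'.le (by linarith))
          gcongr
      _ = ((q⁻¹ - q)/((1-q)*(1-q))) * q ^ (2*n) := by ring
      _ ≤ (1 + (q⁻¹ - q)) / ((1-q)*(1-q)) * q ^ (2*n) := by
          apply mul_le_mul_of_nonneg_right ?_ (by positivity)
          exact div_le_div₀ (by positivity) (by linarith) (by positivity) le_rfl
  · -- (1,0)
    simp only [Matrix.sub_apply, Matrix.smul_apply, smul_eq_mul, Matrix.of_apply, Fin.zero_eta, Fin.mk_one,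
      Matrix.cons_val', Matrix.cons_val_zero, Matrix.cons_val_one, Matrix.empty_val',
      Matrix.cons_val_fin_one, Matrix.head_cons, Matrix.head_fin_const, mul_zero, sub_zero]
    rw [entry10]
    simp
    positivity
  · -- (1,1)
    simp only [Matrix.sub_apply, Matrix.smul_apply, smul_eq_mul, Matrix.of_apply, Fin.mk_one,
      Matrix.cons_val', Matrix.cons_val_zero, Matrix.cons_val_one, Matrix.empty_val',
      Matrix.cons_val_fin_one, Matrix.head_cons, Matrix.head_fin_const]
    rw [entry11 hq0 hq1 hn hile hjle]
    have hT1 : q ^ (2*n + i + j + 1/2) * A * B' ≤ 1 :=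
      mul_le_one₀ (mul_le_one₀ (Real.rpow_le_one hq0.le hq1.le (by linarith)) hA0 hA1) hB'0 hB'1
    exact diagBound _ _ (q ^ (4*n)) (by positivity) hT1 hE4ge rfl hpow4 (by positivity)
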